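/- Let β ≥ 0 and let A = (a_{n,k}) be a lower triangular infinite matrix of nonnegative real numbers (a_{n,k} = 0 for k > n). Suppose there is a constant C, independent of n and m, such that Σ_{k=m}^{∞} (k+1)^β |a_{n,k}/(k+1)^β − a_{n,k+1}/(k+2)^β| ≤ C·a_{n,m} for all 0 ≤ m ≤ n. Then, uniformly in 0 < t ≤ π, |K_n(t)| := |Σ_{k=0}^{n} a_{n,k} · sin((k+1/2)t)/(2 sin(t/2))| = O( t^{-1} · Σ_{r=0}^{τ} a_{n,r} ), where τ = ⌊π/t⌋ and the implied constant is independent of n and t. -/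

import Mathlib

/-!
Write `K_n(t) = (2 sin(t/2))⁻¹ ∑ₖ aₖ sin((k+1/2)t)` and split the sum at `τ = ⌊π/t⌋`. The head
is at most `∑_{r ≤ τ} a_r`. On the tail, two summations by parts (first of `sin((k+1/2)t)`
against the increasing weights `(k+1)^β`, then of these weighted sums against `aₖ/(k+1)^β`)
together with the rest-bounded-variation condition give the bound `2C a_{τ+1} / sin(t/2)`.
Since `1/sin(t/2) ≤ π/t ≤ τ+1`, it remains to show `(τ+1) a_{τ+1} = O(∑_{r ≤ τ} a_r)`: the
condition makes `aₖ/(k+1)^β` almost decreasing, so `a_{τ+1} = O(a_r)` for each of the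
`≈ τ/2` indices `τ/2 ≤ r ≤ τ`.
-/

open Real MeasureTheory

/-- The kernel `K_n(t) = ∑_{k=0}^n a_{n,k} sin((k+1/2)t) / (2 sin(t/2))`. -/
noncomputable def kernelK (a : ℕ → ℕ → ℝ) (n : ℕ) (t : ℝ) : ℝ :=
  ∑ k ∈ Finset.range (n + 1), a n k * Real.sin (((k : ℝ) + 1 / 2) * t) / (2 * Real.sin (t / 2))

open Finset

lemma two_sin_half_mul_sin (x t : ℝ) :
    2 * sin (t / 2) * sin ((x + 1 / 2) * t) = cos (x * t) - cos ((x + 1) * t) := by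
  rw [cos_sub_cos, show (x * t - (x + 1) * t) / 2 = -(t / 2) by ring, sin_neg]
  ring_nf

lemma abs_sum_range_sin_le (m k : ℕ) {t : ℝ} (ht : 0 < sin (t / 2)) :
    |∑ j ∈ range k, sin ((((m + j : ℕ) : ℝ) + 1 / 2) * t)| ≤ 1 / sin (t / 2) := by
  have htelescope : 2 * sin (t / 2) * ∑ j ∈ range k, sin ((((m + j : ℕ) : ℝ) + 1 / 2) * t)
      = cos (m * t) - cos ((m + k : ℕ) * t) := by
    simp_rw [mul_sum, two_sin_half_mul_sin]
    convert sum_range_sub' (fun j : ℕ => cos (((m + j : ℕ) : ℝ) * t)) k using 3 <;>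
      push_cast <;> ring_nf
  have hbound : |2 * sin (t / 2) * ∑ j ∈ range k, sin ((((m + j : ℕ) : ℝ) + 1 / 2) * t)| ≤ 2 := by
    rw [htelescope, abs_le]
    constructor <;> linarith [neg_one_le_cos (m * t), cos_le_one (m * t),
      neg_one_le_cos ((m + k : ℕ) * t), cos_le_one ((m + k : ℕ) * t)]
  rw [abs_mul, abs_of_pos (by positivity)] at hbound
  rw [le_div_iff₀ ht]
  linarith

lemma abs_sum_range_mul_le_of_abs_partial_sum_le (f g B : ℕ → ℝ) (N : ℕ)
    (hB : ∀ i ≤ N, |∑ j ∈ range (i + 1), g j| ≤ B i) :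
    |∑ i ∈ range (N + 1), f i * g i|
      ≤ |f N| * B N + ∑ i ∈ range N, |f (i + 1) - f i| * B i := by
  have := sum_range_by_parts f g (N + 1)
  simp only [smul_eq_mul, Nat.add_sub_cancel] at this
  rw [this]
  refine (abs_sub _ _).trans (add_le_add ?_ ?_)
  · rw [abs_mul]
    exact mul_le_mul_of_nonneg_left (hB N le_rfl) (abs_nonneg _)
  · refine (abs_sum_le_sum_abs _ _).trans (sum_le_sum fun i hi => ?_)
    rw [abs_mul]
    exact mul_le_mul_of_nonneg_left (hB i (mem_range.1 hi).le) (abs_nonneg _)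

lemma abs_sum_range_mul_le_of_monotone {f g : ℕ → ℝ} (hf : Monotone f) (hf0 : 0 ≤ f 0)
    {M : ℝ} (hg : ∀ i, |∑ j ∈ range (i + 1), g j| ≤ M) (N : ℕ) :
    |∑ i ∈ range (N + 1), f i * g i| ≤ 2 * f N * M := by
  have hM : 0 ≤ M := (abs_nonneg _).trans (hg 0)
  have hfN : 0 ≤ f N := hf0.trans (hf (Nat.zero_le N))
  calc |∑ i ∈ range (N + 1), f i * g i|
      ≤ |f N| * M + ∑ i ∈ range N, |f (i + 1) - f i| * M :=
        abs_sum_range_mul_le_of_abs_partial_sum_le f g (fun _ => M) N fun i _ => hg i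
    _ = (2 * f N - f 0) * M := by
        simp_rw [abs_of_nonneg hfN, abs_of_nonneg (sub_nonneg.2 (hf (Nat.le_succ _))), ← sum_mul,
          sum_range_sub f]
        ring
    _ ≤ 2 * f N * M := by nlinarith

lemma succ_mul_le_two_mul_sum_range {u : ℕ → ℝ} (hu : ∀ k, 0 ≤ u k) {x K : ℝ} (hx : 0 ≤ x)
    (hK : 0 ≤ K) (τ : ℕ) (h : ∀ r ∈ Icc (τ / 2) τ, x ≤ K * u r) :
    ((τ : ℝ) + 1) * x ≤ 2 * K * ∑ r ∈ range (τ + 1), u r := by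
  have hcard : (τ : ℝ) + 1 ≤ 2 * (#(Icc (τ / 2) τ) : ℝ) := by
    rw [Nat.card_Icc]
    exact_mod_cast (by omega : τ + 1 ≤ 2 * (τ + 1 - τ / 2))
  calc ((τ : ℝ) + 1) * x ≤ 2 * ∑ _r ∈ Icc (τ / 2) τ, x := by
        rw [sum_const, nsmul_eq_mul, ← mul_assoc]
        gcongr
    _ ≤ 2 * ∑ r ∈ Icc (τ / 2) τ, K * u r := by gcongr with r hr; exact h r hr
    _ ≤ 2 * ∑ r ∈ range (τ + 1), K * u r := by
        have hsub : Icc (τ / 2) τ ⊆ range (τ + 1) := fun r hr => by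
          simp only [mem_Icc, mem_range] at hr ⊢
          omega
        exact mul_le_mul_of_nonneg_left
          (sum_le_sum_of_subset_of_nonneg hsub fun r _ _ => mul_nonneg hK (hu r)) zero_le_two
    _ = 2 * K * ∑ r ∈ range (τ + 1), u r := by rw [← mul_sum, mul_assoc]

-- The `k`-th term of the rest-bounded-variation sum of the row `a`, started at index `m`.
noncomputable def rbvSummand (β : ℝ) (a : ℕ → ℝ) (m k : ℕ) : ℝ :=
  ((m : ℝ) + (k : ℝ) + 1) ^ β *
    |a (m + k) / ((m : ℝ) + (k : ℝ) + 1) ^ β - a (m + k + 1) / ((m : ℝ) + (k : ℝ) + 2) ^ β|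

section Row

variable {β : ℝ} {a : ℕ → ℝ} {n : ℕ} {C : ℝ}

lemma rbvSummand_nonneg (β : ℝ) (a : ℕ → ℝ) (m k : ℕ) : 0 ≤ rbvSummand β a m k := by
  unfold rbvSummand
  positivity

lemma rbvSummand_eq_zero (hsupp : ∀ k, n < k → a k = 0) {m k : ℕ} (h : n < m + k) :
    rbvSummand β a m k = 0 := by
  simp [rbvSummand, hsupp _ h, hsupp (m + k + 1) (by omega)]

lemma rbvSummand_eq (β : ℝ) (a : ℕ → ℝ) (m k : ℕ) :
    rbvSummand β a m k = ((m : ℝ) + k + 1) ^ β *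
      |a (m + k) / ((m : ℝ) + k + 1) ^ β - a (m + (k + 1)) / ((m : ℝ) + (k + 1 : ℕ) + 1) ^ β| := by
  rw [rbvSummand]
  push_cast
  ring_nf

lemma sum_rbvSummand_le (hsupp : ∀ k, n < k → a k = 0)
    (hA : ∀ m ≤ n, ∑' k, rbvSummand β a m k ≤ C * a m) (m : ℕ) (s : Finset ℕ) :
    ∑ k ∈ s, rbvSummand β a m k ≤ C * a m := by
  by_cases hm : m ≤ n
  · have hsummable : Summable (rbvSummand β a m) :=
      summable_of_ne_finset_zero (s := range (n + 1)) fun k hk =>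
        rbvSummand_eq_zero hsupp (by simp at hk; omega)
    exact (hsummable.sum_le_tsum s fun k _ => rbvSummand_nonneg β a m k).trans (hA m hm)
  · rw [hsupp m (by omega), mul_zero]
    exact (sum_eq_zero fun k _ => rbvSummand_eq_zero hsupp (by omega)).le

lemma div_rpow_le_of_sum_rbvSummand_le (hβ : 0 ≤ β) {m : ℕ}
    (hvar : ∀ s : Finset ℕ, ∑ k ∈ s, rbvSummand β a m k ≤ C * a m) (j : ℕ) :
    a (m + j) / ((m : ℝ) + j + 1) ^ β ≤ (1 + C) * (a m / ((m : ℝ) + 1) ^ β) := by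
  set b : ℕ → ℝ := fun j => a (m + j) / ((m : ℝ) + j + 1) ^ β
  have hc : 0 < ((m : ℝ) + 1) ^ β := by positivity
  have hstep : ∀ k, ((m : ℝ) + 1) ^ β * |b k - b (k + 1)| ≤ rbvSummand β a m k := fun k => by
    rw [rbvSummand_eq]
    gcongr
    simp
  have hvariation : ((m : ℝ) + 1) ^ β * |b 0 - b j| ≤ C * a m := calc
    _ ≤ ((m : ℝ) + 1) ^ β * ∑ k ∈ range j, |b k - b (k + 1)| := by
      gcongr
      exact dist_le_range_sum_dist b j
    _ ≤ ∑ k ∈ range j, rbvSummand β a m k := by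
      rw [mul_sum]
      exact sum_le_sum fun k _ => hstep k
    _ ≤ C * a m := hvar _
  have hb0 : b 0 = a m / ((m : ℝ) + 1) ^ β := by simp [b]
  calc b j ≤ b 0 + |b 0 - b j| := by linarith [neg_abs_le (b 0 - b j)]
    _ ≤ b 0 + C * a m / ((m : ℝ) + 1) ^ β := by
      gcongr
      rw [le_div_iff₀ hc, mul_comm]
      exact hvariation
    _ = (1 + C) * (a m / ((m : ℝ) + 1) ^ β) := by rw [hb0]; ring

lemma succ_mul_le_sum_of_rbv (hβ : 0 ≤ β) (hnn : ∀ k, 0 ≤ a k) (hC : 0 ≤ C)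
    (hvar : ∀ m (s : Finset ℕ), ∑ k ∈ s, rbvSummand β a m k ≤ C * a m) (τ : ℕ) :
    ((τ : ℝ) + 1) * a (τ + 1) ≤ 2 * ((1 + C) * 4 ^ β) * ∑ r ∈ range (τ + 1), a r := by
  refine succ_mul_le_two_mul_sum_range hnn (hnn _) (by positivity) τ fun r hr => ?_
  obtain ⟨hτr, hrτ⟩ := mem_Icc.1 hr
  have hcomp := div_rpow_le_of_sum_rbvSummand_le hβ (hvar r) (τ + 1 - r)
  have hcast : (r : ℝ) + ((τ + 1 - r : ℕ) : ℝ) + 1 = τ + 2 := by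
    push_cast [Nat.cast_sub (by omega : r ≤ τ + 1)]
    ring
  rw [show r + (τ + 1 - r) = τ + 1 by omega, hcast] at hcomp
  have hratio : ((τ : ℝ) + 2) ^ β ≤ 4 ^ β * ((r : ℝ) + 1) ^ β := by
    rw [← mul_rpow (by norm_num) (by positivity)]
    gcongr
    exact_mod_cast (by omega : τ + 2 ≤ 4 * (r + 1))
  have hpos : (0 : ℝ) < ((τ : ℝ) + 2) ^ β := by positivity
  calc a (τ + 1) = a (τ + 1) / ((τ : ℝ) + 2) ^ β * ((τ : ℝ) + 2) ^ β := by field_simp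
    _ ≤ (1 + C) * (a r / ((r : ℝ) + 1) ^ β) * (4 ^ β * ((r : ℝ) + 1) ^ β) := by
      gcongr
      have := hnn r
      positivity
    _ = (1 + C) * 4 ^ β * a r := by field_simp

lemma abs_sum_tail_le_of_rbv (hβ : 0 ≤ β) {m : ℕ}
    (hvar : ∀ s : Finset ℕ, ∑ k ∈ s, rbvSummand β a m k ≤ C * a m)
    {t : ℝ} (ht : 0 < sin (t / 2)) {N : ℕ} (hN : a (m + N) = 0) :
    |∑ j ∈ range (N + 1), a (m + j) * sin ((((m + j : ℕ) : ℝ) + 1 / 2) * t)|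
      ≤ 2 * (1 / sin (t / 2)) * (C * a m) := by
  set M := 1 / sin (t / 2)
  set c : ℕ → ℝ := fun j => ((m : ℝ) + j + 1) ^ β
  set b : ℕ → ℝ := fun j => a (m + j) / c j
  set g : ℕ → ℝ := fun j => c j * sin ((((m + j : ℕ) : ℝ) + 1 / 2) * t)
  have hc_pos : ∀ j, 0 < c j := fun j => by positivity
  have hc_mono : Monotone c := fun i j hij => by
    simp only [c]
    gcongr
  have hg : ∀ i, |∑ j ∈ range (i + 1), g j| ≤ 2 * c i * M := abs_sum_range_mul_le_of_monotone
    hc_mono (hc_pos 0).le fun i => abs_sum_range_sin_le m (i + 1) ht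
  have hbN : b N = 0 := by simp [b, hN]
  calc |∑ j ∈ range (N + 1), a (m + j) * sin ((((m + j : ℕ) : ℝ) + 1 / 2) * t)|
      = |∑ j ∈ range (N + 1), b j * g j| := by
        congr 1
        refine sum_congr rfl fun j _ => ?_
        simp only [b, g]
        field_simp [(hc_pos j).ne']
    _ ≤ |b N| * (2 * c N * M) + ∑ i ∈ range N, |b (i + 1) - b i| * (2 * c i * M) :=
        abs_sum_range_mul_le_of_abs_partial_sum_le b g _ N fun i _ => hg i
    _ = 2 * M * ∑ i ∈ range N, rbvSummand β a m i := by
        rw [hbN, abs_zero, zero_mul, zero_add, mul_sum]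
        refine sum_congr rfl fun i _ => ?_
        rw [rbvSummand_eq, abs_sub_comm]
        ring
    _ ≤ 2 * M * (C * a m) := by
        gcongr
        exact hvar _

end Row

lemma one_div_sin_half_le {t : ℝ} (ht : 0 < t) (htπ : t ≤ π) : 1 / sin (t / 2) ≤ π / t := by
  have hjordan := mul_le_sin (x := t / 2) (by linarith) (by linarith)
  rw [div_le_div_iff₀ (by linarith [show 0 < 2 / π * (t / 2) by positivity]) ht, one_mul]
  calc t = π * (2 / π * (t / 2)) := by field_simp
    _ ≤ π * sin (t / 2) := by gcongr

lemma abs_kernelK_le {β C : ℝ} {a : ℕ → ℕ → ℝ} {n : ℕ} (hβ : 0 ≤ β) (hnn : ∀ k, 0 ≤ a n k)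
    (hsupp : ∀ k, n < k → a n k = 0) (hC : 0 ≤ C)
    (hvar : ∀ m (s : Finset ℕ), ∑ k ∈ s, rbvSummand β (a n) m k ≤ C * a n m)
    {t : ℝ} (ht : 0 < t) (htπ : t ≤ π) :
    |kernelK a n t| ≤ π * (1 / 2 + 2 * C * ((1 + C) * 4 ^ β)) *
      (t⁻¹ * ∑ r ∈ range (⌊π / t⌋₊ + 1), a n r) := by
  set τ := ⌊π / t⌋₊
  set S := ∑ r ∈ range (τ + 1), a n r
  set M := 1 / sin (t / 2)
  set s : ℕ → ℝ := fun k => a n k * sin (((k : ℝ) + 1 / 2) * t)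
  have hsin : 0 < sin (t / 2) := sin_pos_of_pos_of_lt_pi (by linarith) (by linarith)
  have hMπ : M ≤ π / t := one_div_sin_half_le ht htπ
  have hMτ : M ≤ τ + 1 := hMπ.trans (Nat.lt_floor_add_one _).le
  have hker : kernelK a n t = M / 2 * ∑ k ∈ range (n + 1), s k := by
    rw [kernelK, ← sum_div]
    simp only [M, s]
    ring
  have hsplit : ∑ k ∈ range (n + 1), s k
      = ∑ k ∈ range (τ + 1), s k + ∑ j ∈ range (n + 1), s (τ + 1 + j) := by
    have hvanish : ∑ j ∈ range (τ + 1), s (n + 1 + j) = 0 :=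
      sum_eq_zero fun j _ => by simp only [s, hsupp (n + 1 + j) (by omega), zero_mul]
    rw [← sum_range_add, ← add_zero (∑ k ∈ range (n + 1), s k), ← hvanish, ← sum_range_add,
      add_comm]
  have hhead : |∑ k ∈ range (τ + 1), s k| ≤ S := (abs_sum_le_sum_abs _ _).trans <|
    sum_le_sum fun k _ => by
      rw [abs_mul, abs_of_nonneg (hnn k)]
      exact mul_le_of_le_one_right (hnn k) (abs_sin_le_one _)
  have htail : |∑ j ∈ range (n + 1), s (τ + 1 + j)| ≤ 2 * M * (C * a n (τ + 1)) :=
    abs_sum_tail_le_of_rbv hβ (hvar _) hsin (hsupp _ (by omega))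
  have hcount := succ_mul_le_sum_of_rbv hβ hnn hC hvar τ
  have hS : 0 ≤ S := sum_nonneg fun r _ => hnn r
  have ha : 0 ≤ a n (τ + 1) := hnn _
  calc |kernelK a n t| ≤ M / 2 * (S + 2 * M * (C * a n (τ + 1))) := by
        rw [hker, hsplit, abs_mul, abs_of_pos (by positivity)]
        gcongr
        exact (abs_add_le _ _).trans (add_le_add hhead htail)
    _ = M / 2 * S + C * M * (M * a n (τ + 1)) := by ring
    _ ≤ π / t / 2 * S + C * (π / t) * ((τ + 1) * a n (τ + 1)) := by gcongr
    _ ≤ π / t / 2 * S + C * (π / t) * (2 * ((1 + C) * 4 ^ β) * S) := by gcongr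
    _ = π * (1 / 2 + 2 * C * ((1 + C) * 4 ^ β)) * (t⁻¹ * S) := by ring

theorem kernel_est_RBV_general
    (β : ℝ) (hβ : 0 ≤ β)
    (a : ℕ → ℕ → ℝ) (htri : ∀ n k : ℕ, n < k → a n k = 0)
    (hnn : ∀ n k : ℕ, 0 ≤ a n k)
    (C : ℝ)
    (hA : ∀ n m : ℕ, m ≤ n →
      ∑' k : ℕ,
        ((m : ℝ) + (k : ℝ) + 1) ^ β *
          |a n (m + k) / ((m : ℝ) + (k : ℝ) + 1) ^ β -
            a n (m + k + 1) / ((m : ℝ) + (k : ℝ) + 2) ^ β|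
        ≤ C * a n m)
    :
    ∃ C' : ℝ, 0 < C' ∧ ∀ (n : ℕ) (t : ℝ), 0 < t → t ≤ Real.pi →
      |kernelK a n t| ≤ C' * (t⁻¹ * ∑ r ∈ Finset.range (⌊Real.pi / t⌋₊ + 1), a n r) := by
  set C₀ := max C 0
  have hA₀ : ∀ n m, m ≤ n → ∑' k, rbvSummand β (a n) m k ≤ C₀ * a n m := fun n m hm =>
    (hA n m hm).trans (mul_le_mul_of_nonneg_right (le_max_left C 0) (hnn n m))
  refine ⟨π * (1 / 2 + 2 * C₀ * ((1 + C₀) * 4 ^ β)), by positivity, fun n t ht htπ => ?_⟩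
  exact abs_kernelK_le hβ (hnn n) (htri n) (le_max_right C 0)
    (sum_rbvSummand_le (htri n) (hA₀ n)) ht htπ

theorem kernel_est_RBV
    (β : ℝ) (hβ : 0 ≤ β)
    (a : ℕ → ℕ → ℝ) (htri : ∀ n k : ℕ, n < k → a n k = 0)
    (hnn : ∀ n k : ℕ, 0 ≤ a n k)
    (C : ℝ) (hC : 0 < C)
    (hA : ∀ n m : ℕ, m ≤ n →
      ∑' k : ℕ,
        ((m : ℝ) + (k : ℝ) + 1) ^ β *
          |a n (m + k) / ((m : ℝ) + (k : ℝ) + 1) ^ β -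
            a n (m + k + 1) / ((m : ℝ) + (k : ℝ) + 2) ^ β|
        ≤ C * a n m)
    :
    ∃ C' : ℝ, 0 < C' ∧ ∀ (n : ℕ) (t : ℝ), 0 < t → t ≤ Real.pi →
      |kernelK a n t| ≤ C' * (t⁻¹ * ∑ r ∈ Finset.range (⌊Real.pi / t⌋₊ + 1), a n r) :=
  kernel_est_RBV_general β hβ a htri hnn C hA
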